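/- arXiv:2408.16750 — 5 statements merged into one kernel-verified Lean document; each statement's English description precedes it below -/
import Mathlib

section
/- Let d > 0 be a real number, n a finite index type, and P, R, V ∈ Matrix n n ℂ such that: P is Hermitian and P² = P; P·R = R·P = 0; the ℓ²→ℓ² operator norm of R is strictly less than d; and V is unitary. Set T = (d•P + R)·V. Then: (i) every eigenvalue λ ∈ ℂ of T satisfies |λ| ≤ d; (ii) if ψ is a nonzero vector and θ ∈ ℝ are such that ψ* T = d·e^{iθ}·ψ* (where ψ* denotes the conjugate-transpose row vector of ψ), then ψ* P = ψ* and ψ* (P V P) = e^{iθ} ψ*. -/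
set_option synthInstance.maxHeartbeats 1000000
set_option maxHeartbeats 1000000

open Matrix

section aux
variable {n : Type*} [Fintype n] [DecidableEq n]

noncomputable abbrev ee (x : n → ℂ) : EuclideanSpace ℂ n := (WithLp.equiv 2 (n → ℂ)).symm x

lemma ee_add (x y : n → ℂ) : ee (x + y) = ee x + ee y := rfl
lemma ee_smul (c : ℂ) (x : n → ℂ) : ee (c • x) = c • ee x := rfl
lemma ee_zero : (ee (0 : n → ℂ)) = 0 := rfl

lemma ee_eq_zero {x : n → ℂ} (h : ee x = 0) : x = 0 :=
  (WithLp.equiv 2 (n → ℂ)).symm.injective (h.trans ee_zero.symm)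

set_option linter.unusedSectionVars false

lemma vecMul_smulMat (c : ℂ) (v : n → ℂ) (M : Matrix n n ℂ) :
    v ᵥ* (c • M) = c • (v ᵥ* M) := by
  ext i
  simp [Matrix.vecMul, dotProduct, Finset.mul_sum, mul_left_comm]

lemma aux_inner (A B : Matrix n n ℂ) (h : Aᴴ * B = 0) (x y : n → ℂ) :
    (inner ℂ (ee (A *ᵥ x)) (ee (B *ᵥ y)) : ℂ) = 0 := by
  simp only [ee, WithLp.equiv_symm_apply, EuclideanSpace.inner_toLp_toLp]
  rw [dotProduct_comm, star_mulVec, dotProduct_mulVec, vecMul_vecMul, h,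
    vecMul_zero, zero_dotProduct]

lemma aux_pyth (A B : Matrix n n ℂ) (h : Aᴴ * B = 0) (x y : n → ℂ) :
    ‖ee (A *ᵥ x + B *ᵥ y)‖ ^ 2 = ‖ee (A *ᵥ x)‖ ^ 2 + ‖ee (B *ᵥ y)‖ ^ 2 := by
  rw [ee_add]
  have := norm_add_sq_eq_norm_sq_add_norm_sq_of_inner_eq_zero _ _ (aux_inner A B h x y)
  simpa [sq] using this

lemma aux_bound (d : ℝ) (hd : 0 ≤ d) (P' R' : Matrix n n ℂ)
    (hP' : P'ᴴ = P') (hP2 : P' * P' = P')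
    (hPR : P' * R' = 0) (hRP : R' * P' = 0) (x : n → ℂ) :
    ‖ee (((d : ℂ) • P' + R') *ᵥ x)‖ ^ 2
      + (d ^ 2 - ‖Matrix.toEuclideanCLM (𝕜 := ℂ) R'‖ ^ 2) * ‖ee (x - P' *ᵥ x)‖ ^ 2
      ≤ d ^ 2 * ‖ee x‖ ^ 2 := by
  set r := ‖Matrix.toEuclideanCLM (𝕜 := ℂ) R'‖ with hr
  have hr0 : 0 ≤ r := norm_nonneg _
  have hq : x - P' *ᵥ x = (1 - P') *ᵥ x := by rw [sub_mulVec, one_mulVec]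
  have h1 : ‖ee (((d : ℂ) • P' + R') *ᵥ x)‖ ^ 2
      = ‖ee (((d : ℂ) • P') *ᵥ x)‖ ^ 2 + ‖ee (R' *ᵥ x)‖ ^ 2 := by
    rw [add_mulVec]
    refine aux_pyth _ _ ?_ x x
    rw [conjTranspose_smul, Matrix.smul_mul, hP', hPR, smul_zero]
  have h2 : ‖ee (((d : ℂ) • P') *ᵥ x)‖ = d * ‖ee (P' *ᵥ x)‖ := by
    rw [smul_mulVec, ee_smul, norm_smul, Complex.norm_real,
      Real.norm_of_nonneg hd]
  have h3 : ‖ee (R' *ᵥ x)‖ ≤ r * ‖ee (x - P' *ᵥ x)‖ := by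
    have hx : R' *ᵥ x = R' *ᵥ (x - P' *ᵥ x) := by
      rw [mulVec_sub, mulVec_mulVec, hRP, zero_mulVec, sub_zero]
    rw [hx]
    have := (Matrix.toEuclideanCLM (𝕜 := ℂ) R').le_opNorm (ee (x - P' *ᵥ x))
    exact this
  have h4 : ‖ee x‖ ^ 2 = ‖ee (P' *ᵥ x)‖ ^ 2 + ‖ee (x - P' *ᵥ x)‖ ^ 2 := by
    have hx : x = P' *ᵥ x + (1 - P') *ᵥ x := by rw [← hq]; ring
    conv_lhs => rw [hx]
    rw [hq]
    refine aux_pyth _ _ ?_ x x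
    rw [hP', Matrix.mul_sub, Matrix.mul_one, hP2, sub_self]
  have h5 : ‖ee (R' *ᵥ x)‖ ^ 2 ≤ r ^ 2 * ‖ee (x - P' *ᵥ x)‖ ^ 2 := by
    nlinarith [norm_nonneg (ee (R' *ᵥ x)), norm_nonneg (ee (x - P' *ᵥ x))]
  rw [h1, h2, h4, mul_pow]
  nlinarith [h5]

end aux

theorem lemma1_maximal_left_eigenvectors
    (n : Type*) [Fintype n] [DecidableEq n] (d : ℝ) (hd : 0 < d)
    (P R V : Matrix n n ℂ)
    (hP : P.IsHermitian) (hP2 : P * P = P)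
    (hPR : P * R = 0) (hRP : R * P = 0)
    (hR : ‖LinearMap.toContinuousLinearMap (Matrix.toEuclideanLin R)‖ < d)
    (hV : V ∈ Matrix.unitaryGroup n ℂ) :
    -- (i) every eigenvalue of `T = (d•P + R)·V` has modulus at most `d`
    (∀ lam ∈ spectrum ℂ (((d : ℂ) • P + R) * V), ‖lam‖ ≤ d) ∧
    -- (ii) any maximal left eigenvector lies in the range of `P` and is a maximal left
    -- eigenvector of the compression `P V P`
    (∀ (ψ : n → ℂ) (θ : ℝ), ψ ≠ 0 →
      Matrix.vecMul (star ψ) (((d : ℂ) • P + R) * V)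
          = ((d : ℂ) * Complex.exp (θ * Complex.I)) • star ψ →
      Matrix.vecMul (star ψ) P = star ψ ∧
      Matrix.vecMul (star ψ) (P * V * P) = Complex.exp (θ * Complex.I) • star ψ) := by
  have hRnorm : ‖Matrix.toEuclideanCLM (𝕜 := ℂ) R‖ < d := hR
  have hVV : V * Vᴴ = 1 := by
    have := (Matrix.mem_unitaryGroup_iff).mp hV
    rwa [Matrix.star_eq_conjTranspose] at this
  have hVV' : Vᴴ * V = 1 := by
    have := (Matrix.mem_unitaryGroup_iff').mp hV
    rwa [Matrix.star_eq_conjTranspose] at this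
  -- V preserves Euclidean norms
  have hVnorm : ∀ x : n → ℂ, ‖ee (V *ᵥ x)‖ = ‖ee x‖ := by
    intro x
    have key : (inner ℂ (ee (V *ᵥ x)) (ee (V *ᵥ x)) : ℂ) = inner ℂ (ee x) (ee x) := by
      simp only [ee, WithLp.equiv_symm_apply, EuclideanSpace.inner_toLp_toLp]
      rw [dotProduct_comm, dotProduct_comm x,
        star_mulVec, dotProduct_mulVec, vecMul_vecMul, hVV', vecMul_one]
    rw [inner_self_eq_norm_sq_to_K, inner_self_eq_norm_sq_to_K] at key
    have key2 : ‖ee (V *ᵥ x)‖ ^ 2 = ‖ee x‖ ^ 2 := by exact_mod_cast key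
    rw [← Real.sqrt_sq (norm_nonneg (ee (V *ᵥ x))), ← Real.sqrt_sq (norm_nonneg (ee x)), key2]
  constructor
  · -- part (i)
    intro lam hlam
    rw [← AlgEquiv.spectrum_eq (Matrix.toLinAlgEquiv' (R := ℂ) (n := n))] at hlam
    have hE := Module.End.hasEigenvalue_iff_mem_spectrum.mpr hlam
    obtain ⟨v, hv⟩ := hE.exists_hasEigenvector
    have hmv : (((d : ℂ) • P + R) * V) *ᵥ v = lam • v := by
      have := hv.apply_eq_smul
      rwa [Matrix.toLinAlgEquiv'_apply] at this
    have hv0 : 0 < ‖ee v‖ := by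
      rw [norm_pos_iff]
      exact fun h => hv.right (ee_eq_zero h)
    have h1 : ‖ee ((((d : ℂ) • P + R) * V) *ᵥ v)‖ = ‖lam‖ * ‖ee v‖ := by
      rw [hmv, ee_smul, norm_smul]
    have h2 : ‖ee ((((d : ℂ) • P + R) * V) *ᵥ v)‖ ≤ d * ‖ee v‖ := by
      rw [← mulVec_mulVec]
      have hb := aux_bound d hd.le P R hP hP2 hPR hRP (V *ᵥ v)
      have hd2r : 0 ≤ d ^ 2 - ‖Matrix.toEuclideanCLM (𝕜 := ℂ) R‖ ^ 2 := by
        nlinarith [norm_nonneg (Matrix.toEuclideanCLM (𝕜 := ℂ) R)]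
      have hnn : 0 ≤ (d ^ 2 - ‖Matrix.toEuclideanCLM (𝕜 := ℂ) R‖ ^ 2)
          * ‖ee ((V *ᵥ v) - P *ᵥ (V *ᵥ v))‖ ^ 2 :=
        mul_nonneg hd2r (sq_nonneg _)
      rw [hVnorm v] at hb
      have hsq : ‖ee (((d : ℂ) • P + R) *ᵥ (V *ᵥ v))‖ ^ 2 ≤ (d * ‖ee v‖) ^ 2 := by
        rw [mul_pow]
        linarith [hb, hnn]
      have hle := Real.sqrt_le_sqrt hsq
      rwa [Real.sqrt_sq (norm_nonneg (ee (((d : ℂ) • P + R) *ᵥ (V *ᵥ v)))),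
        Real.sqrt_sq (by positivity : (0:ℝ) ≤ d * ‖ee v‖)] at hle
    exact le_of_mul_le_mul_right (h1 ▸ h2) hv0
  · -- part (ii)
    intro ψ θ hψ hEig
    set c : ℂ := (d : ℂ) * Complex.exp (θ * Complex.I) with hc
    have hdC : (d : ℂ) ≠ 0 := by exact_mod_cast hd.ne'
    have hPRH : P * Rᴴ = 0 := by
      rw [← hP, ← conjTranspose_mul, hRP, conjTranspose_zero]
    have hRHP : Rᴴ * P = 0 := by
      rw [← hP, ← conjTranspose_mul, hPR, conjTranspose_zero]
    have hRHnorm : ‖Matrix.toEuclideanCLM (𝕜 := ℂ) Rᴴ‖ < d := by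
      have he : Matrix.toEuclideanCLM (𝕜 := ℂ) (star R)
          = star (Matrix.toEuclideanCLM (𝕜 := ℂ) R) := StarHomClass.map_star _ _
      rw [← Matrix.star_eq_conjTranspose, he, ContinuousLinearMap.star_eq_adjoint,
        LinearIsometryEquiv.norm_map ContinuousLinearMap.adjoint]
      exact hRnorm
    -- transpose the left eigenvector equation
    have hT : (((d : ℂ) • P + R) * V)ᴴ *ᵥ ψ = star c • ψ := by
      have h := congrArg star hEig
      rwa [star_vecMul, star_star, star_smul, star_star] at h
    have hTH : (((d : ℂ) • P + R) * V)ᴴ = Vᴴ * ((d : ℂ) • P + Rᴴ) := by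
      rw [conjTranspose_mul, conjTranspose_add, conjTranspose_smul, hP.eq, Complex.star_def,
        Complex.conj_ofReal]
    have hS : ((d : ℂ) • P + Rᴴ) *ᵥ ψ = star c • (V *ᵥ ψ) := by
      have h := congrArg (fun w => V *ᵥ w) hT
      simp only [mulVec_mulVec] at h
      rw [hTH, ← Matrix.mul_assoc, hVV, Matrix.one_mul] at h
      rw [h, mulVec_smul]
    have hnorm : ‖ee (((d : ℂ) • P + Rᴴ) *ᵥ ψ)‖ = d * ‖ee ψ‖ := by
      rw [hS, ee_smul, norm_smul, hVnorm ψ, norm_star, hc]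
      simp [_root_.map_mul, Complex.norm_exp_ofReal_mul_I,
        Complex.norm_real, abs_of_pos hd]
    have hb := aux_bound d hd.le P Rᴴ hP hP2 hPRH hRHP ψ
    rw [hnorm, mul_pow] at hb
    have hq0 : ψ - P *ᵥ ψ = 0 := by
      apply ee_eq_zero
      apply norm_eq_zero.mp
      have hr0 : (0:ℝ) ≤ ‖Matrix.toEuclideanCLM (𝕜 := ℂ) Rᴴ‖ := norm_nonneg _
      have hqnn := norm_nonneg (ee (ψ - P *ᵥ ψ))
      have h6 : (d ^ 2 - ‖Matrix.toEuclideanCLM (𝕜 := ℂ) Rᴴ‖ ^ 2)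
          * ‖ee (ψ - P *ᵥ ψ)‖ ^ 2 ≤ 0 := by linarith [hb]
      have h7 : 0 < d ^ 2 - ‖Matrix.toEuclideanCLM (𝕜 := ℂ) Rᴴ‖ ^ 2 := by nlinarith [hr0]
      have h8 : ‖ee (ψ - P *ᵥ ψ)‖ ^ 2 ≤ 0 := by
        by_contra hcon
        push_neg at hcon
        exact absurd h6 (not_le.mpr (mul_pos h7 hcon))
      have hs0 : ‖ee (ψ - P *ᵥ ψ)‖ ≤ 0 := by nlinarith [h8, hqnn]
      exact le_antisymm hs0 (norm_nonneg _)
    have hPψ : P *ᵥ ψ = ψ := (sub_eq_zero.mp hq0).symm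
    have goal1 : star ψ ᵥ* P = star ψ := by
      have h := star_mulVec P ψ
      rw [hPψ, hP.eq] at h
      exact h.symm
    refine ⟨goal1, ?_⟩
    have hRψ : star ψ ᵥ* R = 0 := by
      have h0 : Rᴴ *ᵥ ψ = 0 := by rw [← hPψ, mulVec_mulVec, hRHP, zero_mulVec]
      have h1 := mulVec_conjTranspose R ψ
      rw [h0] at h1
      exact star_eq_zero.mp h1.symm
    have hT0ψ : star ψ ᵥ* ((d : ℂ) • P + R) = (d : ℂ) • star ψ := by
      rw [vecMul_add, hRψ, add_zero, vecMul_smulMat, goal1]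
    have hVψ : star ψ ᵥ* V = Complex.exp (θ * Complex.I) • star ψ := by
      have h := hEig
      rw [← vecMul_vecMul, hT0ψ, smul_vecMul, hc, mul_smul] at h
      exact smul_right_injective (n → ℂ) hdC h
    rw [← vecMul_vecMul, ← vecMul_vecMul, goal1, hVψ, smul_vecMul, goal1]
end

section
/- Let d ≥ 1, let ι be a type, and let ρ : ι → Matrix (Fin d) (Fin d) ℂ be a family of matrices with each ρ_i unitary and det ρ_i = 1. Assume the family freely generates a free group, i.e., the group homomorphism from the free group FreeGroup ι to the group of invertible d×d complex matrices determined by of(i) ↦ ρ_i is injective. Then for every z ≥ 1 and all j, k : Fin z → ι: if j = k then tr( ρ_{j_1}⋯ρ_{j_z} · (ρ_{k_1}⋯ρ_{k_z})† ) = d, while if j ≠ k then |tr( ρ_{j_1}⋯ρ_{j_z} · (ρ_{k_1}⋯ρ_{k_z})† )| < d. -/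
open Matrix

-- torsion-freeness of free groups via Nielsen-Schreier
lemma freeGroup_pow_eq_one {α : Type*} (x : FreeGroup α) (n : ℕ) (hn : n ≠ 0)
    (h : x ^ n = 1) : x = 1 := by
  by_contra hx
  have hfin : IsOfFinOrder x := isOfFinOrder_iff_pow_eq_one.2 ⟨n, Nat.pos_of_ne_zero hn, h⟩
  set H := Subgroup.zpowers x with hH
  haveI : Nontrivial H :=
    ⟨⟨⟨x, Subgroup.mem_zpowers x⟩, 1, fun hc => hx (by simpa using congrArg Subtype.val hc)⟩⟩
  have hall : ∀ g : H, IsOfFinOrder g := by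
    intro g
    have h1 : IsOfFinOrder (g : FreeGroup α) := hfin.of_mem_zpowers g.2
    obtain ⟨m, hm, hg⟩ := isOfFinOrder_iff_pow_eq_one.1 h1
    exact isOfFinOrder_iff_pow_eq_one.2 ⟨m, hm, by ext; simpa using hg⟩
  haveI : Nonempty (IsFreeGroup.Generators H) := by
    by_contra hempty
    haveI : IsEmpty (IsFreeGroup.Generators H) := not_nonempty_iff.1 hempty
    obtain ⟨a, b, hab⟩ := (inferInstance : Nontrivial H)
    exact hab ((IsFreeGroup.toFreeGroup (G := H)).injective (Subsingleton.elim _ _))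
  obtain ⟨s⟩ := (inferInstance : Nonempty (IsFreeGroup.Generators H))
  obtain ⟨m, hm, hs⟩ := isOfFinOrder_iff_pow_eq_one.1 (hall (IsFreeGroup.of s))
  have h2 : (IsFreeGroup.lift (fun _ => Multiplicative.ofAdd (1 : ℤ)) (IsFreeGroup.of s)) ^ m
      = 1 := by rw [← map_pow, hs, _root_.map_one]
  rw [IsFreeGroup.lift_of] at h2
  have h3 := congrArg Multiplicative.toAdd h2
  simp at h3
  omega

lemma prod_of_eq_mk {α : Type*} (L : List α) :
    (L.map FreeGroup.of).prod = FreeGroup.mk (L.map fun x => (x, true)) := by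
  induction L with
  | nil => simp [FreeGroup.one_eq_mk]
  | cons a L ih => simp [ih, FreeGroup.of, FreeGroup.mul_mk]

lemma reduce_map_true {α : Type*} [DecidableEq α] (L : List α) :
    FreeGroup.reduce (L.map fun x => (x, true)) = L.map fun x => (x, true) := by
  induction L with
  | nil => simp
  | cons a L ih =>
    rw [List.map_cons, FreeGroup.reduce.cons, ih]
    cases h : L.map (fun x => (x, true)) with
    | nil => simp
    | cons hd tl =>
      have h2 : hd.2 = true := by
        have : hd ∈ L.map (fun x => (x, true)) := h ▸ List.mem_cons_self
        obtain ⟨y, -, rfl⟩ := List.mem_map.1 this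
        rfl
      simp [h2]

lemma prod_of_inj {α : Type*} {z : ℕ} (j k : Fin z → α)
    (h : (List.ofFn fun a => FreeGroup.of (j a)).prod
      = (List.ofFn fun a => FreeGroup.of (k a)).prod) : j = k := by
  classical
  have hj : (List.ofFn fun a => FreeGroup.of (j a)) = (List.ofFn j).map FreeGroup.of := by
    rw [List.map_ofFn]; rfl
  have hk : (List.ofFn fun a => FreeGroup.of (k a)) = (List.ofFn k).map FreeGroup.of := by
    rw [List.map_ofFn]; rfl
  rw [hj, hk, prod_of_eq_mk, prod_of_eq_mk] at h
  have h2 := congrArg FreeGroup.toWord h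
  rw [FreeGroup.toWord_mk, FreeGroup.toWord_mk, reduce_map_true, reduce_map_true] at h2
  have h3 : List.ofFn j = List.ofFn k :=
    List.map_injective_iff.2 (fun a b hab => congrArg Prod.fst hab) h2
  exact List.ofFn_injective h3

lemma unitary_trace_bound (d : ℕ) (hd : 0 < d) (U : Matrix (Fin d) (Fin d) ℂ)
    (hU : U ∈ Matrix.unitaryGroup (Fin d) ℂ) :
    ‖Matrix.trace U‖ ≤ d ∧
      (‖Matrix.trace U‖ = d → ∃ c : ℂ, U = c • 1) := by
  have hU' := Matrix.mem_unitaryGroup_iff'.mp hU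
  have hcol : ∀ i, ∑ l, Complex.normSq (U l i) = 1 := by
    intro i
    have h1 : (star U * U) i i = (1 : Matrix (Fin d) (Fin d) ℂ) i i := by rw [hU']
    rw [Matrix.mul_apply, Matrix.one_apply_eq] at h1
    have h2 : ∀ l, (star U) i l * U l i = ((Complex.normSq (U l i) : ℝ) : ℂ) := by
      intro l
      rw [Matrix.star_apply, Complex.star_def, ← Complex.normSq_eq_conj_mul_self]
    rw [Finset.sum_congr rfl (fun l _ => h2 l)] at h1
    exact_mod_cast h1
  have hb : ∀ l i, Complex.normSq (U l i) ≤ 1 := by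
    intro l i
    calc Complex.normSq (U l i)
        ≤ ∑ m, Complex.normSq (U m i) :=
          Finset.single_le_sum (f := fun m => Complex.normSq (U m i))
            (fun m _ => Complex.normSq_nonneg _) (Finset.mem_univ l)
      _ = 1 := hcol i
  have habs : ∀ i, ‖U i i‖ ≤ 1 := by
    intro i
    have h1 := Complex.sq_norm (U i i)
    nlinarith [norm_nonneg (U i i), hb i i]
  have htr : ‖Matrix.trace U‖ ≤ d := by
    calc ‖Matrix.trace U‖
        ≤ ∑ i, ‖U i i‖ := norm_sum_le _ _
      _ ≤ ∑ _i : Fin d, 1 := Finset.sum_le_sum (fun i _ => habs i)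
      _ = d := by simp
  refine ⟨htr, fun heq => ?_⟩
  set t := Matrix.trace U with ht
  set c : ℂ := t / d with hc
  have hdC : (d : ℂ) ≠ 0 := Nat.cast_ne_zero.2 hd.ne'
  have hcabs : ‖c‖ = 1 := by
    rw [hc, norm_div, heq]
    simp only [Complex.norm_natCast]
    exact div_self (by exact_mod_cast hd.ne')
  have hcsq : Complex.normSq c = 1 := by
    rw [← Complex.sq_norm, hcabs]; norm_num
  set V : Matrix (Fin d) (Fin d) ℂ := (starRingEnd ℂ c) • U with hV
  have hVapp : ∀ l i, V l i = (starRingEnd ℂ c) * U l i := fun l i => rfl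
  have hVsq : ∀ l i, Complex.normSq (V l i) = Complex.normSq (U l i) := by
    intro l i
    rw [hVapp, _root_.map_mul, Complex.normSq_conj, hcsq, one_mul]
  have htrV : Matrix.trace V = (d : ℂ) := by
    have : Matrix.trace V = (starRingEnd ℂ c) * t := by
      rw [hV, Matrix.trace_smul]; rfl
    rw [this, hc, map_div₀, Complex.conj_natCast, div_mul_eq_mul_div,
      Complex.conj_mul']
    rw [heq]
    push_cast
    field_simp
  have hre1 : ∀ i, (V i i).re = 1 := by
    have hrele : ∀ i, (V i i).re ≤ 1 := by
      intro i
      have h1 : (V i i).re ≤ ‖V i i‖ := Complex.re_le_norm _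
      have h2 := Complex.sq_norm (V i i)
      nlinarith [norm_nonneg (V i i), (hVsq i i) ▸ hb i i]
    have hsum : ∑ i, (V i i).re = d := by
      have : Matrix.trace V = ∑ i, V i i := rfl
      have h2 := congrArg Complex.re htrV
      rw [this] at h2
      simpa [Complex.re_sum] using h2
    intro i
    by_contra hne
    have hlt : (V i i).re < 1 := lt_of_le_of_ne (hrele i) hne
    have : ∑ i, (V i i).re < ∑ _i : Fin d, 1 :=
      Finset.sum_lt_sum (fun m _ => hrele m) ⟨i, Finset.mem_univ i, hlt⟩
    simp [hsum] at this
  have hdiag : ∀ i, V i i = 1 := by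
    intro i
    have h1 : Complex.normSq (V i i) ≤ 1 := (hVsq i i) ▸ hb i i
    have h2 := hre1 i
    have h3 : Complex.normSq (V i i) = (V i i).re ^ 2 + (V i i).im ^ 2 := by
      rw [Complex.normSq_apply]; ring
    have him : (V i i).im = 0 := by nlinarith
    exact Complex.ext (by rw [h2]; rfl) (by rw [him]; rfl)
  have hoff : ∀ l i, l ≠ i → V l i = 0 := by
    intro l i hli
    have hcolV : ∑ m, Complex.normSq (V m i) = 1 := by
      rw [Finset.sum_congr rfl (fun m _ => hVsq m i)]; exact hcol i
    have hsplit := Finset.add_sum_erase Finset.univ (fun m => Complex.normSq (V m i))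
      (Finset.mem_univ i)
    rw [hcolV, hdiag i] at hsplit
    simp only [Complex.normSq_one] at hsplit
    have hsplit : ∑ m ∈ Finset.univ.erase i, Complex.normSq (V m i) = 0 := by linarith
    have hz : ∀ m ∈ Finset.univ.erase i, Complex.normSq (V m i) = 0 :=
      (Finset.sum_eq_zero_iff_of_nonneg (fun m _ => Complex.normSq_nonneg _)).1 hsplit
    have := hz l (Finset.mem_erase.2 ⟨hli, Finset.mem_univ l⟩)
    exact Complex.normSq_eq_zero.1 this
  have hV1 : V = 1 := by
    ext l i
    by_cases h : l = i
    · subst h; rw [hdiag l, Matrix.one_apply_eq]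
    · rw [hoff l i h, Matrix.one_apply_ne h]
  refine ⟨c, ?_⟩
  have : c • V = U := by
    rw [hV, smul_smul, Complex.mul_conj', hcabs]
    norm_num
  rw [hV1] at this
  exact this.symm


theorem free_family_trace_gap
    (d : ℕ) (hd : 1 ≤ d) (ι : Type*) (ρ : ι → Matrix (Fin d) (Fin d) ℂ)
    (hunit : ∀ i, ρ i ∈ Matrix.unitaryGroup (Fin d) ℂ)
    (hdet : ∀ i, (ρ i).det = 1)
    -- the family freely generates a free group: the induced homomorphism from the free group
    -- on `ι` to invertible `d×d` matrices sending `of i` to `ρ i` is injective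
    (u : ι → (Matrix (Fin d) (Fin d) ℂ)ˣ) (hu : ∀ i, (u i : Matrix (Fin d) (Fin d) ℂ) = ρ i)
    (hinj : Function.Injective (FreeGroup.lift u))
    (z : ℕ) (hz : 1 ≤ z) (j k : Fin z → ι) :
    (j = k →
      Matrix.trace ((List.ofFn fun a => ρ (j a)).prod *
        ((List.ofFn fun a => ρ (k a)).prod)ᴴ) = d) ∧
    (j ≠ k →
      ‖Matrix.trace ((List.ofFn fun a => ρ (j a)).prod *
        ((List.ofFn fun a => ρ (k a)).prod)ᴴ)‖ < d) := by
  classical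
  have hPU : ∀ f : Fin z → ι,
      (List.ofFn fun a => ρ (f a)).prod ∈ Matrix.unitaryGroup (Fin d) ℂ := by
    intro f
    apply Submonoid.list_prod_mem
    intro x hx
    simp only [List.mem_ofFn, Set.mem_range] at hx
    obtain ⟨a, rfl⟩ := hx
    exact hunit _
  have hdetf : ∀ f : Fin z → ι, ((List.ofFn fun a => ρ (f a)).prod).det = 1 := by
    intro f
    have := map_list_prod (Matrix.detMonoidHom (n := Fin d) (R := ℂ))
      (List.ofFn fun a => ρ (f a))
    simp only [Matrix.coe_detMonoidHom] at this
    rw [this, List.map_ofFn]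
    have : (Matrix.det ∘ fun a => ρ (f a)) = fun _ => (1 : ℂ) := by
      funext a; exact hdet (f a)
    rw [this]
    simp
  have hup : ∀ f : Fin z → ι,
      (((List.ofFn fun a => u (f a)).prod : (Matrix (Fin d) (Fin d) ℂ)ˣ) :
        Matrix (Fin d) (Fin d) ℂ) = (List.ofFn fun a => ρ (f a)).prod := by
    intro f
    rw [← Units.coeHom_apply, map_list_prod, List.map_ofFn]
    exact congrArg List.prod (congrArg List.ofFn (funext fun a => hu (f a)))
  have hlift : ∀ f : Fin z → ι,
      FreeGroup.lift u ((List.ofFn fun a => FreeGroup.of (f a)).prod)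
        = (List.ofFn fun a => u (f a)).prod := by
    intro f
    rw [map_list_prod, List.map_ofFn]
    exact congrArg List.prod (congrArg List.ofFn (funext fun a =>
      (FreeGroup.lift_apply_of : FreeGroup.lift u (FreeGroup.of (f a)) = u (f a))))
  constructor
  · rintro rfl
    have h1 : (List.ofFn fun a => ρ (j a)).prod * ((List.ofFn fun a => ρ (j a)).prod)ᴴ = 1 := by
      rw [← Matrix.star_eq_conjTranspose]
      exact Matrix.mem_unitaryGroup_iff.mp (hPU j)
    rw [h1, Matrix.trace_one]
    simp
  · intro hjk
    set Pj := (List.ofFn fun a => ρ (j a)).prod with hPj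
    set Pk := (List.ofFn fun a => ρ (k a)).prod with hPk
    set M := Pj * Pkᴴ with hM
    have hMU : M ∈ Matrix.unitaryGroup (Fin d) ℂ := by
      rw [hM, ← Matrix.star_eq_conjTranspose]
      exact mul_mem (hPU j) (Unitary.star_mem (hPU k))
    obtain ⟨hle, hsc⟩ := unitary_trace_bound d (by omega) M hMU
    refine lt_of_le_of_ne hle ?_
    intro heq
    obtain ⟨c, hc⟩ := hsc heq
    have hdetM : M.det = 1 := by
      rw [hM, Matrix.det_mul, Matrix.det_conjTranspose, hdetf j, hdetf k]
      simp
    have hcd : c ^ d = 1 := by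
      rw [hc] at hdetM
      simpa [Matrix.det_smul, Fintype.card_fin] using hdetM
    have hMd : M ^ d = 1 := by
      rw [hc, smul_pow, one_pow, hcd, one_smul]
    set wj := (List.ofFn fun a => FreeGroup.of (j a)).prod with hwj
    set wk := (List.ofFn fun a => FreeGroup.of (k a)).prod with hwk
    set g := wj * wk⁻¹ with hg
    have hkinv : (((((List.ofFn fun a => u (k a)).prod))⁻¹ : (Matrix (Fin d) (Fin d) ℂ)ˣ) :
        Matrix (Fin d) (Fin d) ℂ) = Pkᴴ := by
      apply Units.inv_eq_of_mul_eq_one_right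
      rw [hup k, ← Matrix.star_eq_conjTranspose]
      exact Matrix.mem_unitaryGroup_iff.mp (hPU k)
    have hliftg : ((FreeGroup.lift u g : (Matrix (Fin d) (Fin d) ℂ)ˣ) :
        Matrix (Fin d) (Fin d) ℂ) = M := by
      rw [hg, _root_.map_mul, map_inv, hlift j, hlift k, Units.val_mul, hup j, hkinv]
    have hgd : FreeGroup.lift u (g ^ d) = 1 := by
      apply Units.ext
      rw [map_pow, Units.val_pow_eq_pow_val, hliftg, hMd, Units.val_one]
    have hg1 : g ^ d = 1 := hinj (by rw [hgd, _root_.map_one])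
    have hgone : g = 1 := freeGroup_pow_eq_one g d (by omega) hg1
    rw [hg, mul_inv_eq_one] at hgone
    exact hjk (prod_of_inj j k hgone)
end

section
/- Let d ≥ 1 and let v, u^(1), …, u^(d) be d×d complex unitary matrices. Define the matrix U indexed by (Fin d × Fin d) × (Fin d × Fin d) with entries U_{(a,b),(i,j)} = v_{aj} · (u^(a))_{bi}, and define its space-time dual Ũ by Ũ_{(i,j),(k,l)} = U_{(j,l),(i,k)}. Then both U and Ũ are unitary matrices. -/
/-!
The gate factors as `S · U^[u],← · (1 ⊗ v)`, a product of a permutation, a block-diagonal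
matrix with unitary blocks and a Kronecker product of unitaries, so it is unitary. Its
space-time dual is, after relabelling both qudits, again a gate of the family `S_←`, built from
`v` and the transposes of the `u^(a)`; hence it is unitary as well.
-/

open Matrix

open scoped Kronecker

namespace Matrix

variable {m n o R : Type*} [Fintype m] [DecidableEq m] [Fintype n] [DecidableEq n]
  [Fintype o] [DecidableEq o] [CommRing R] [StarRing R]

theorem submatrix_mem_unitaryGroup {A : Matrix n n R} (hA : A ∈ unitaryGroup n R)
    (e₁ e₂ : m ≃ n) : A.submatrix e₁ e₂ ∈ unitaryGroup m R := by
  rw [mem_unitaryGroup_iff, star_eq_conjTranspose, conjTranspose_submatrix,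
    submatrix_mul_equiv, ← star_eq_conjTranspose, mem_unitaryGroup_iff.mp hA,
    submatrix_one_equiv]

theorem blockDiagonal_mem_unitaryGroup {M : o → Matrix m m R}
    (hM : ∀ k, M k ∈ unitaryGroup m R) : blockDiagonal M ∈ unitaryGroup (m × o) R := by
  rw [mem_unitaryGroup_iff, star_eq_conjTranspose, blockDiagonal_conjTranspose,
    ← blockDiagonal_mul, ← blockDiagonal_one]
  exact congrArg blockDiagonal (funext fun k => mem_unitaryGroup_iff.mp (hM k))

end Matrix

def spaceTimeDual {n α : Type*} (U : Matrix (n × n) (n × n) α) : Matrix (n × n) (n × n) α :=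
  of fun p q => U (p.2, q.2) (p.1, q.1)

section SLeft

variable {n R : Type*} [Fintype n] [DecidableEq n] [CommRing R]

/-- The gate `S · U^[u],← · (1 ⊗ v)` of the family `S_←`: `blockDiagonal u` is the control
gate `U^[u],←`, and reindexing the rows by `Prod.swap` is left multiplication by `S`. -/
def sLeftGate (v : Matrix n n R) (u : n → Matrix n n R) : Matrix (n × n) (n × n) R :=
  (blockDiagonal u * (1 ⊗ₖ v)).submatrix Prod.swap id

theorem sLeftGate_apply (v : Matrix n n R) (u : n → Matrix n n R) (a b i j : n) :
    sLeftGate v u (a, b) (i, j) = v a j * u a b i := by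
  simp [sLeftGate, mul_apply, blockDiagonal_apply, one_apply, Fintype.sum_prod_type,
    mul_comm]

theorem sLeftGate_mem_unitaryGroup [StarRing R] {v : Matrix n n R} {u : n → Matrix n n R}
    (hv : v ∈ unitaryGroup n R) (hu : ∀ a, u a ∈ unitaryGroup n R) :
    sLeftGate v u ∈ unitaryGroup (n × n) R :=
  submatrix_mem_unitaryGroup
    (mul_mem (blockDiagonal_mem_unitaryGroup hu) (kronecker_mem_unitary (one_mem _) hv))
    (Equiv.prodComm n n) (Equiv.refl _)

theorem spaceTimeDual_sLeftGate (v : Matrix n n R) (u : n → Matrix n n R) :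
    spaceTimeDual (sLeftGate v u) =
      (sLeftGate v fun a => (u a)ᵀ).submatrix Prod.swap Prod.swap := by
  ext ⟨i, j⟩ ⟨k, l⟩
  simp [spaceTimeDual, sLeftGate_apply]

end SLeft

theorem family_S_left_is_dual_unitary_general
    (d : ℕ)
    (v : Matrix (Fin d) (Fin d) ℂ) (hv : v ∈ Matrix.unitaryGroup (Fin d) ℂ)
    (u : Fin d → Matrix (Fin d) (Fin d) ℂ) (hu : ∀ a, u a ∈ Matrix.unitaryGroup (Fin d) ℂ)
    (U Udual : Matrix (Fin d × Fin d) (Fin d × Fin d) ℂ)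
    (hU : ∀ a b i j, U (a, b) (i, j) = v a j * (u a) b i)
    (hUdual : ∀ i j k l, Udual (i, j) (k, l) = U (j, l) (i, k)) :
    U ∈ Matrix.unitaryGroup (Fin d × Fin d) ℂ ∧
    Udual ∈ Matrix.unitaryGroup (Fin d × Fin d) ℂ := by
  have hU_eq : U = sLeftGate v u := by
    ext ⟨a, b⟩ ⟨i, j⟩
    rw [hU, sLeftGate_apply]
  have hUdual_eq : Udual = spaceTimeDual U := by
    ext ⟨i, j⟩ ⟨k, l⟩
    exact hUdual i j k l
  refine ⟨hU_eq ▸ sLeftGate_mem_unitaryGroup hv hu, ?_⟩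
  rw [hUdual_eq, hU_eq, spaceTimeDual_sLeftGate]
  exact submatrix_mem_unitaryGroup
    (sLeftGate_mem_unitaryGroup hv fun a => transpose_mem_unitaryGroup_iff.mpr (hu a))
    (Equiv.prodComm _ _) (Equiv.prodComm _ _)

theorem family_S_left_is_dual_unitary
    (d : ℕ) (hd : 1 ≤ d)
    (v : Matrix (Fin d) (Fin d) ℂ) (hv : v ∈ Matrix.unitaryGroup (Fin d) ℂ)
    (u : Fin d → Matrix (Fin d) (Fin d) ℂ) (hu : ∀ a, u a ∈ Matrix.unitaryGroup (Fin d) ℂ)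
    (U Udual : Matrix (Fin d × Fin d) (Fin d × Fin d) ℂ)
    (hU : ∀ a b i j, U (a, b) (i, j) = v a j * (u a) b i)
    (hUdual : ∀ i j k l, Udual (i, j) (k, l) = U (j, l) (i, k)) :
    U ∈ Matrix.unitaryGroup (Fin d × Fin d) ℂ ∧
    Udual ∈ Matrix.unitaryGroup (Fin d × Fin d) ℂ :=
  family_S_left_is_dual_unitary_general d v hv u hu U Udual hU hUdual
end

section
/- Let D, D′, m, m′ ≥ 1. Let Π : Fin m → Matrix (Fin D) (Fin D) ℂ and Π′ : Fin m′ → Matrix (Fin D′) (Fin D′) ℂ be two families of nonzero, Hermitian, pairwise orthogonal idempotents (Π_α Π_β = δ_{αβ} Π_α and likewise for Π′) with Σ_α Π_α = 1 and Σ_β Π′_β = 1, and set d_α = tr(Π_α), d′_β = tr(Π′_β) (positive reals). Let c : Fin m → Fin m′ → ℝ satisfy c_{αβ} ≥ 0 and Σ_{α,β} c_{αβ} = 1, and define the matrix σ = Σ_{α,β} ( c_{αβ} / (d_α · d′_β) ) • (Π_α ⊗ Π′_β), where ⊗ is the Kronecker product. Then: (i) σ is Hermitian and positive semidefinite with tr(σ)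 = 1; (ii) the sum over all eigenvalues λ_i of σ (with multiplicity) of −λ_i log λ_i equals Σ_{α,β} c_{αβ} · ( log(d_α d′_β) − log c_{αβ} ) (with the convention 0·log 0 = 0). -/
open Matrix Kronecker ComplexOrder


lemma unitary_conj_pow {n : Type*} [Fintype n] [DecidableEq n] (U D : Matrix n n ℂ)
    (hU1 : star U * U = 1) (hU2 : U * star U = 1) (k : ℕ) :
    (U * D * star U) ^ k = U * D ^ k * star U := by
  induction k with
  | zero => simp [hU2]
  | succ k ih =>
      rw [pow_succ, ih, pow_succ]
      calc U * D ^ k * star U * (U * D * star U)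
          = U * D ^ k * (star U * U) * D * star U := by noncomm_ring
        _ = U * (D ^ k * D) * star U := by rw [hU1]; noncomm_ring

lemma herm_trace_pow {n : Type*} [Fintype n] [DecidableEq n] {A : Matrix n n ℂ}
    (hA : A.IsHermitian) (k : ℕ) :
    (A ^ k).trace = ∑ i, ((hA.eigenvalues i : ℝ) : ℂ) ^ k := by
  have hU1 : star (hA.eigenvectorUnitary : Matrix n n ℂ) * (hA.eigenvectorUnitary : Matrix n n ℂ) = 1 :=
    hA.eigenvectorUnitary.2.1
  have hU2 : (hA.eigenvectorUnitary : Matrix n n ℂ) * star (hA.eigenvectorUnitary : Matrix n n ℂ) = 1 :=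
    hA.eigenvectorUnitary.2.2
  have key : (A ^ k).trace = ((hA.eigenvectorUnitary : Matrix n n ℂ)
      * (diagonal (RCLike.ofReal ∘ hA.eigenvalues)) ^ k
      * star (hA.eigenvectorUnitary : Matrix n n ℂ)).trace := by
    conv_lhs => rw [hA.spectral_theorem, Unitary.conjStarAlgAut_apply,
      unitary_conj_pow _ _ hU1 hU2 k]
  rw [key, Matrix.trace_mul_cycle, hU1, Matrix.one_mul,
    Matrix.diagonal_pow, Matrix.trace_diagonal]
  simp [RCLike.ofReal]

lemma kron_conjT {n n' : Type*} [Fintype n] [Fintype n'] (A : Matrix n n ℂ) (B : Matrix n' n' ℂ) :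
    (A ⊗ₖ B)ᴴ = Aᴴ ⊗ₖ Bᴴ := by
  ext i j
  simp [Matrix.conjTranspose_apply, Matrix.kroneckerMap_apply, star_mul']

lemma proj_trace {n : Type*} [Fintype n] [DecidableEq n] {A : Matrix n n ℂ}
    (hA : A.IsHermitian) (hidem : A * A = A) (hne : A ≠ 0) :
    A.trace = ((A.trace.re : ℝ) : ℂ) ∧ 0 < A.trace.re := by
  have key : A.trace = ((∑ i, ∑ j, Complex.normSq (A i j) : ℝ) : ℂ) := by
    calc A.trace = (A * Aᴴ).trace := by rw [hA, hidem]
    _ = ((∑ i, ∑ j, Complex.normSq (A i j) : ℝ) : ℂ) := by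
        simp [Matrix.trace, Matrix.diag, Matrix.mul_apply, Matrix.conjTranspose_apply,
          Complex.mul_conj]
  have hpos : 0 < ∑ i, ∑ j, Complex.normSq (A i j) := by
    obtain ⟨i, j, hij⟩ : ∃ i j, A i j ≠ 0 := by
      by_contra h; push_neg at h
      exact hne (by ext i j; simp [h])
    refine Finset.sum_pos' (fun i _ => Finset.sum_nonneg fun j _ => Complex.normSq_nonneg _)
      ⟨i, Finset.mem_univ i, Finset.sum_pos' (fun j _ => Complex.normSq_nonneg _)
        ⟨j, Finset.mem_univ j, Complex.normSq_pos.mpr hij⟩⟩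
  have hre : A.trace.re = ∑ i, ∑ j, Complex.normSq (A i j) := by rw [key]; simp
  exact ⟨by rw [hre, ← key], by rw [hre]; exact hpos⟩

theorem charged_state_entropy
    (D D' m m' : ℕ) (hD : 1 ≤ D) (hD' : 1 ≤ D') (hm : 1 ≤ m) (hm' : 1 ≤ m')
    (P : Fin m → Matrix (Fin D) (Fin D) ℂ)
    (Q : Fin m' → Matrix (Fin D') (Fin D') ℂ)
    (hPherm : ∀ α, (P α).IsHermitian) (hQherm : ∀ β, (Q β).IsHermitian)
    (hPorth : ∀ α α', α ≠ α' → P α * P α' = 0)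
    (hQorth : ∀ β β', β ≠ β' → Q β * Q β' = 0)
    (hPidem : ∀ α, P α * P α = P α) (hQidem : ∀ β, Q β * Q β = Q β)
    (hPsum : ∑ α, P α = 1) (hQsum : ∑ β, Q β = 1)
    (hPne : ∀ α, P α ≠ 0) (hQne : ∀ β, Q β ≠ 0)
    (c : Fin m → Fin m' → ℝ) (hc : ∀ α β, 0 ≤ c α β) (hcsum : ∑ α, ∑ β, c α β = 1)
    (σ : Matrix (Fin D × Fin D') (Fin D × Fin D') ℂ)
    (hσdef : σ = ∑ α, ∑ β,
        (((c α β / ((P α).trace.re * (Q β).trace.re) : ℝ) : ℂ)) • (P α ⊗ₖ Q β)) :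
    -- (i) σ is Hermitian, positive semidefinite, of unit trace
    σ.IsHermitian ∧ σ.PosSemidef ∧ σ.trace = 1 ∧
    -- (ii) the von Neumann entropy of σ equals `∑ c_{αβ} (log(d_α d'_β) − log c_{αβ})`
    (∀ hσ : σ.IsHermitian,
      ∑ i, (-(hσ.eigenvalues i) * Real.log (hσ.eigenvalues i))
        = ∑ α, ∑ β, c α β *
            (Real.log ((P α).trace.re * (Q β).trace.re) - Real.log (c α β))) := by
  -- basic positivity of the sector dimensions
  have hPtr := fun α => proj_trace (hPherm α) (hPidem α) (hPne α)
  have hQtr := fun β => proj_trace (hQherm β) (hQidem β) (hQne β)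
  set dP : Fin m → ℝ := fun α => (P α).trace.re with hdP
  set dQ : Fin m' → ℝ := fun β => (Q β).trace.re with hdQ
  have hdPpos : ∀ α, 0 < dP α := fun α => (hPtr α).2
  have hdQpos : ∀ β, 0 < dQ β := fun β => (hQtr β).2
  have htpos : ∀ α β, 0 < dP α * dQ β := fun α β => mul_pos (hdPpos α) (hdQpos β)
  set μ : Fin m → Fin m' → ℝ := fun α β => c α β / (dP α * dQ β) with hμ
  have hμnonneg : ∀ α β, 0 ≤ μ α β := fun α β => div_nonneg (hc α β) (htpos α β).le
  -- properties of the Kronecker projectors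
  have hEherm : ∀ α β, (P α ⊗ₖ Q β).IsHermitian := by
    intro α β
    show _ = _
    rw [kron_conjT, hPherm α, hQherm β]
  have hEmul : ∀ α α' β β', (P α ⊗ₖ Q β) * (P α' ⊗ₖ Q β')
      = if α = α' ∧ β = β' then P α ⊗ₖ Q β else 0 := by
    intro α α' β β'
    rw [← Matrix.mul_kronecker_mul]
    by_cases hα : α = α'
    · subst hα
      by_cases hβ : β = β'
      · subst hβ; simp [hPidem, hQidem]
      · simp [hβ, hQorth _ _ hβ]
    · simp [hα, hPorth _ _ hα]
  have htrE : ∀ α β, (P α ⊗ₖ Q β).trace = ((dP α * dQ β : ℝ) : ℂ) := by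
    intro α β
    rw [Matrix.trace_kronecker, (hPtr α).1, (hQtr β).1]
    push_cast
    rfl
  have hEsum : ∑ α, ∑ β, (P α ⊗ₖ Q β) = (1 : Matrix (Fin D × Fin D') (Fin D × Fin D') ℂ) := by
    have : ∑ α, ∑ β, (P α ⊗ₖ Q β) = (∑ α, P α) ⊗ₖ (∑ β, Q β) := by
      ext i j
      simp only [Matrix.sum_apply, Matrix.kroneckerMap_apply, Finset.sum_mul_sum]
    rw [this, hPsum, hQsum, Matrix.one_kronecker_one]
  -- (i) Hermitian
  have hσherm : σ.IsHermitian := by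
    rw [hσdef]
    show _ = _
    rw [Matrix.conjTranspose_sum]
    refine Finset.sum_congr rfl fun α _ => ?_
    rw [Matrix.conjTranspose_sum]
    refine Finset.sum_congr rfl fun β _ => ?_
    rw [Matrix.conjTranspose_smul, kron_conjT, hPherm α, hQherm β]
    congr 1
    simp [Complex.star_def, Complex.conj_ofReal]
  -- (i) PosSemidef
  have hEpsd : ∀ α β, (P α ⊗ₖ Q β).PosSemidef := by
    intro α β
    have h1 : (P α ⊗ₖ Q β) = (P α ⊗ₖ Q β)ᴴ * (P α ⊗ₖ Q β) := by
      rw [hEherm α β, hEmul]; simp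
    rw [h1]
    exact Matrix.posSemidef_conjTranspose_mul_self _
  have hσpsd : σ.PosSemidef := by
    rw [hσdef]
    refine Finset.sum_induction _ _ (fun a b ha hb => ha.add hb) Matrix.PosSemidef.zero
      (fun α _ => Finset.sum_induction _ _ (fun a b ha hb => ha.add hb) Matrix.PosSemidef.zero
        (fun β _ => ?_))
    refine ⟨?_, fun x => ?_⟩
    · show _ = _
      rw [Matrix.conjTranspose_smul, (hEherm α β)]
      congr 1
      simp [Complex.star_def, Complex.conj_ofReal]
    · have hx := ((hEpsd α β).smul (Complex.zero_le_real.mpr (hμnonneg α β))).2 x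
      exact hx
  -- (i) trace one
  have hσtr : σ.trace = 1 := by
    rw [hσdef]
    rw [Matrix.trace_sum]
    have : ∀ α, (∑ β, ((μ α β : ℝ) : ℂ) • (P α ⊗ₖ Q β)).trace = ∑ β, ((c α β : ℝ) : ℂ) := by
      intro α
      rw [Matrix.trace_sum]
      refine Finset.sum_congr rfl fun β _ => ?_
      rw [Matrix.trace_smul, htrE, smul_eq_mul, ← Complex.ofReal_mul,
        div_mul_cancel₀ _ (htpos α β).ne']
    rw [Finset.sum_congr rfl fun α _ => this α]
    norm_cast
  refine ⟨hσherm, hσpsd, hσtr, ?_⟩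
  intro hσ
  set E : Fin m → Fin m' → Matrix (Fin D × Fin D') (Fin D × Fin D') ℂ :=
    fun α β => P α ⊗ₖ Q β with hEdef
  have hσdef' : σ = ∑ α, ∑ β, ((μ α β : ℝ) : ℂ) • E α β := hσdef
  have hterm : ∀ (a b : Fin m → Fin m' → ℂ) (α α' : Fin m) (β β' : Fin m'),
      (a α β • E α β) * (b α' β' • E α' β')
        = if α = α' ∧ β = β' then (a α β * b α β) • E α β else 0 := by
    intro a b α α' β β'
    rw [Matrix.smul_mul, Matrix.mul_smul, smul_smul, hEmul]
    split_ifs with h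
    · obtain ⟨h1, h2⟩ := h; subst h1; subst h2; rfl
    · simp
  have hmul : ∀ (a b : Fin m → Fin m' → ℂ),
      (∑ α, ∑ β, a α β • E α β) * (∑ α, ∑ β, b α β • E α β)
        = ∑ α, ∑ β, (a α β * b α β) • E α β := by
    intro a b
    rw [Finset.sum_mul]
    refine Finset.sum_congr rfl fun α _ => ?_
    rw [Finset.sum_mul]
    refine Finset.sum_congr rfl fun β _ => ?_
    rw [Finset.mul_sum]
    calc ∑ α', (a α β • E α β) * (∑ β', b α' β' • E α' β')
        = ∑ α', ∑ β', (a α β • E α β) * (b α' β' • E α' β') := by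
          refine Finset.sum_congr rfl fun α' _ => ?_
          rw [Finset.mul_sum]
      _ = ∑ α', ∑ β', if α = α' ∧ β = β' then (a α β * b α β) • E α β else 0 := by
          simp_rw [hterm]
      _ = (a α β * b α β) • E α β := by
          simp [ite_and, Finset.sum_ite_eq, Finset.mem_univ]
  have hpow : ∀ k : ℕ, σ ^ (k + 1) = ∑ α, ∑ β, ((μ α β : ℝ) : ℂ) ^ (k + 1) • E α β := by
    intro k
    induction k with
    | zero => rw [pow_one, hσdef']; simp
    | succ k ih =>
        rw [pow_succ, ih, hσdef', hmul]
        refine Finset.sum_congr rfl fun α _ => Finset.sum_congr rfl fun β _ => ?_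
        rw [← pow_succ]
  have hM : ∀ k : ℕ, ∑ i, (hσ.eigenvalues i) ^ k
      = ∑ α, ∑ β, (μ α β) ^ k * (dP α * dQ β) := by
    intro k
    have h1 : (σ ^ k).trace = ∑ i, ((hσ.eigenvalues i : ℝ) : ℂ) ^ k := herm_trace_pow hσ k
    have h2 : (σ ^ k).trace
        = ∑ α, ∑ β, ((μ α β : ℝ) : ℂ) ^ k * ((dP α * dQ β : ℝ) : ℂ) := by
      cases k with
      | zero =>
          rw [pow_zero, ← hEsum, Matrix.trace_sum]
          simp_rw [Matrix.trace_sum]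
          simp [htrE]
      | succ k =>
          rw [hpow k, Matrix.trace_sum]
          simp_rw [Matrix.trace_sum, Matrix.trace_smul, hEdef, htrE, smul_eq_mul]
    have h3 := h1.symm.trans h2
    have hcast : ((∑ i, (hσ.eigenvalues i) ^ k : ℝ) : ℂ)
        = ((∑ α, ∑ β, (μ α β) ^ k * (dP α * dQ β) : ℝ) : ℂ) := by
      push_cast
      push_cast at h3
      exact h3
    exact_mod_cast hcast
  have hpoly : ∀ g : Polynomial ℝ,
      ∑ i, Polynomial.eval (hσ.eigenvalues i) g
        = ∑ α, ∑ β, Polynomial.eval (μ α β) g * (dP α * dQ β) := by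
    intro g
    calc ∑ i, Polynomial.eval (hσ.eigenvalues i) g
        = ∑ i, ∑ k ∈ Finset.range (g.natDegree + 1), g.coeff k * (hσ.eigenvalues i) ^ k := by
          refine Finset.sum_congr rfl fun i _ => ?_
          exact Polynomial.eval_eq_sum_range _
      _ = ∑ k ∈ Finset.range (g.natDegree + 1), g.coeff k * ∑ i, (hσ.eigenvalues i) ^ k := by
          rw [Finset.sum_comm]
          simp_rw [Finset.mul_sum]
      _ = ∑ k ∈ Finset.range (g.natDegree + 1), ∑ α, ∑ β,
            (g.coeff k * (μ α β) ^ k) * (dP α * dQ β) := by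
          simp_rw [hM, Finset.mul_sum, mul_assoc]
      _ = ∑ α, ∑ β, (∑ k ∈ Finset.range (g.natDegree + 1), g.coeff k * (μ α β) ^ k)
            * (dP α * dQ β) := by
          rw [Finset.sum_comm]
          refine Finset.sum_congr rfl fun α _ => ?_
          rw [Finset.sum_comm]
          refine Finset.sum_congr rfl fun β _ => ?_
          rw [Finset.sum_mul]
      _ = ∑ α, ∑ β, Polynomial.eval (μ α β) g * (dP α * dQ β) := by
          refine Finset.sum_congr rfl fun α _ => Finset.sum_congr rfl fun β _ => ?_
          rw [← Polynomial.eval_eq_sum_range]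
  set S : Finset ℝ := (Finset.univ.image hσ.eigenvalues)
      ∪ (Finset.univ.image fun p : Fin m × Fin m' => μ p.1 p.2) with hS
  set f : ℝ → ℝ := fun x => -x * Real.log x with hf
  have hinj : Set.InjOn id (S : Set ℝ) := Function.injective_id.injOn
  have heval : ∀ x ∈ S, Polynomial.eval x (Lagrange.interpolate S id f) = f x := by
    intro x hx
    simpa using Lagrange.eval_interpolate_at_node f hinj hx
  calc ∑ i, (-(hσ.eigenvalues i) * Real.log (hσ.eigenvalues i))
      = ∑ i, Polynomial.eval (hσ.eigenvalues i) (Lagrange.interpolate S id f) := by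
        refine Finset.sum_congr rfl fun i _ => ?_
        rw [heval _ (Finset.mem_union_left _ (Finset.mem_image_of_mem _ (Finset.mem_univ i)))]
    _ = ∑ α, ∑ β, Polynomial.eval (μ α β) (Lagrange.interpolate S id f) * (dP α * dQ β) :=
        hpoly _
    _ = ∑ α, ∑ β, f (μ α β) * (dP α * dQ β) := by
        refine Finset.sum_congr rfl fun α _ => Finset.sum_congr rfl fun β _ => ?_
        rw [heval _ (Finset.mem_union_right _
          (Finset.mem_image_of_mem _ (Finset.mem_univ (α, β))))]
    _ = ∑ α, ∑ β, c α β *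
          (Real.log ((P α).trace.re * (Q β).trace.re) - Real.log (c α β)) := by
        refine Finset.sum_congr rfl fun α _ => Finset.sum_congr rfl fun β _ => ?_
        show (-(μ α β) * Real.log (μ α β)) * (dP α * dQ β)
          = c α β * (Real.log (dP α * dQ β) - Real.log (c α β))
        by_cases hc0 : c α β = 0
        · have : μ α β = 0 := by rw [hμ]; simp [hc0]
          rw [this, hc0]
          simp
        · have ht := htpos α β
          have hμeq : μ α β = c α β / (dP α * dQ β) := rfl
          rw [hμeq, Real.log_div hc0 ht.ne']
          have := (hdPpos α).ne'; have := (hdQpos β).ne'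
          field_simp
          ring
end

section
/- Fix integers d ≥ 2 and z ≥ 1. For every choice of d×d complex unitary matrices u^(1), …, u^(d), v, the transfer matrix T = T(u, v, z) satisfies: (i) T Ψ_z = d Ψ_z; (ii) Ψ_zᵀ T = d Ψ_zᵀ; (iii) every eigenvalue λ ∈ ℂ of T satisfies |λ| ≤ d. In particular, the spectral radius of T equals d. -/
open MeasureTheory Matrix

/-- The folded transfer matrix `T(u, v, z)` of a dual-unitary circuit with local gate in the
family `S_←`: its entry in row `(j⃗, k⃗)` and column `(j⃗′, k⃗′)` is
`tr(u^(j₁)⋯u^(j_z) · (u^(k₁)⋯u^(k_z))†) · ∏ₐ v_{jₐ j′ₐ} · conj(v_{kₐ k′ₐ})`. -/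
noncomputable def transferT (d z : ℕ) (u : Fin d → Matrix (Fin d) (Fin d) ℂ)
    (v : Matrix (Fin d) (Fin d) ℂ) :
    Matrix ((Fin z → Fin d) × (Fin z → Fin d)) ((Fin z → Fin d) × (Fin z → Fin d)) ℂ :=
  Matrix.of fun p q =>
    Matrix.trace ((List.ofFn fun a => u (p.1 a)).prod * ((List.ofFn fun a => u (p.2 a)).prod)ᴴ)
      * ∏ a, (v (p.1 a) (q.1 a) * (starRingEnd ℂ) (v (p.2 a) (q.2 a)))

/-- The folded identity ("bullet") state `Ψ_z`, with `Ψ_z(j⃗, k⃗) = δ_{j⃗ k⃗}`. -/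
def bulletPsi (d z : ℕ) : (Fin z → Fin d) × (Fin z → Fin d) → ℂ :=
  fun p => if p.1 = p.2 then 1 else 0

section Aux
variable {d z : ℕ} {v : Matrix (Fin d) (Fin d) ℂ}

lemma prod_boole_eq (j k : Fin z → Fin d) :
    (∏ a, (if j a = k a then (1:ℂ) else 0)) = if j = k then 1 else 0 := by
  rw [Finset.prod_boole]; simp [funext_iff]

lemma sum_prod_swap (f : Fin z → Fin d → ℂ) :
    ∑ m : Fin z → Fin d, ∏ a, f a (m a) = ∏ a, ∑ t, f a t := by
  have := Finset.prod_univ_sum (t := fun _ : Fin z => (Finset.univ : Finset (Fin d)))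
    (f := fun a t => f a t)
  rw [Fintype.piFinset_univ] at this
  exact this.symm

lemma hvvH (hv : v ∈ Matrix.unitaryGroup (Fin d) ℂ) (x y : Fin d) :
    ∑ m, v x m * (starRingEnd ℂ) (v y m) = if x = y then 1 else 0 := by
  have h : v * star v = 1 := (Matrix.mem_unitaryGroup_iff).mp hv
  have := congrFun (congrFun h x) y
  simpa [Matrix.mul_apply, Matrix.star_eq_conjTranspose, Matrix.conjTranspose_apply,
    Matrix.one_apply] using this

lemma hvHv (hv : v ∈ Matrix.unitaryGroup (Fin d) ℂ) (x y : Fin d) :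
    ∑ m, (starRingEnd ℂ) (v m x) * v m y = if x = y then 1 else 0 := by
  have h : star v * v = 1 := (Matrix.mem_unitaryGroup_iff').mp hv
  have := congrFun (congrFun h x) y
  simpa [Matrix.mul_apply, Matrix.star_eq_conjTranspose, Matrix.conjTranspose_apply,
    Matrix.one_apply] using this

lemma keyR (hv : v ∈ Matrix.unitaryGroup (Fin d) ℂ) (j k : Fin z → Fin d) :
    ∑ m : Fin z → Fin d, ∏ a, (v (j a) (m a) * (starRingEnd ℂ) (v (k a) (m a)))
      = if j = k then 1 else 0 := by
  rw [sum_prod_swap (fun a t => v (j a) t * (starRingEnd ℂ) (v (k a) t)), ← prod_boole_eq j k]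
  exact Finset.prod_congr rfl fun a _ => hvvH hv (j a) (k a)

lemma keyC (hv : v ∈ Matrix.unitaryGroup (Fin d) ℂ) (j k : Fin z → Fin d) :
    ∑ m : Fin z → Fin d, ∏ a, (v (m a) (j a) * (starRingEnd ℂ) (v (m a) (k a)))
      = if j = k then 1 else 0 := by
  rw [sum_prod_swap (fun a t => v t (j a) * (starRingEnd ℂ) (v t (k a))), ← prod_boole_eq j k]
  refine Finset.prod_congr rfl fun a _ => ?_
  have := congrArg (starRingEnd ℂ) (hvHv hv (j a) (k a))
  simpa [map_sum, mul_comm, apply_ite] using this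

lemma keyC' (hv : v ∈ Matrix.unitaryGroup (Fin d) ℂ) (j k : Fin z → Fin d) :
    ∑ m : Fin z → Fin d, ∏ a, ((starRingEnd ℂ) (v (m a) (j a)) * v (m a) (k a))
      = if j = k then 1 else 0 := by
  rw [sum_prod_swap (fun a t => (starRingEnd ℂ) (v t (j a)) * v t (k a)), ← prod_boole_eq j k]
  exact Finset.prod_congr rfl fun a _ => hvHv hv (j a) (k a)

lemma prodU_mem {u : Fin d → Matrix (Fin d) (Fin d) ℂ}
    (hu : ∀ i, u i ∈ Matrix.unitaryGroup (Fin d) ℂ) (p : Fin z → Fin d) :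
    (List.ofFn fun a => u (p a)).prod ∈ Matrix.unitaryGroup (Fin d) ℂ := by
  apply Submonoid.list_prod_mem
  intro x hx
  simp only [List.mem_ofFn] at hx
  obtain ⟨a, rfl⟩ := hx
  exact hu _

lemma trace_self (A : Matrix (Fin d) (Fin d) ℂ) (hA : A ∈ Matrix.unitaryGroup (Fin d) ℂ) :
    Matrix.trace (A * Aᴴ) = (d : ℂ) := by
  rw [← Matrix.star_eq_conjTranspose, (Matrix.mem_unitaryGroup_iff).mp hA]
  simp

lemma trace_bound (A B : Matrix (Fin d) (Fin d) ℂ)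
    (hA : A ∈ Matrix.unitaryGroup (Fin d) ℂ) (hB : B ∈ Matrix.unitaryGroup (Fin d) ℂ) :
    ‖Matrix.trace (A * Bᴴ)‖ ≤ d := by
  have hAB : A * Bᴴ ∈ Matrix.unitaryGroup (Fin d) ℂ := by
    rw [← Matrix.star_eq_conjTranspose]
    exact mul_mem hA (Unitary.star_mem hB)
  calc ‖Matrix.trace (A * Bᴴ)‖ ≤ ∑ i, ‖(A * Bᴴ) i i‖ := by
        rw [Matrix.trace]
        exact norm_sum_le _ _
    _ ≤ ∑ _i : Fin d, (1:ℝ) := Finset.sum_le_sum fun i _ => by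
        simpa using entry_norm_bound_of_unitary hAB i i
    _ = d := by simp

/-- the "v-part" matrix `W` -/
noncomputable def Wmat (d z : ℕ) (v : Matrix (Fin d) (Fin d) ℂ) :
    Matrix ((Fin z → Fin d) × (Fin z → Fin d)) ((Fin z → Fin d) × (Fin z → Fin d)) ℂ :=
  Matrix.of fun p q => ∏ a, (v (p.1 a) (q.1 a) * (starRingEnd ℂ) (v (p.2 a) (q.2 a)))

lemma Wmat_unitary (hv : v ∈ Matrix.unitaryGroup (Fin d) ℂ) :
    (Wmat d z v)ᴴ * Wmat d z v = 1 := by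
  ext q q'
  rw [Matrix.mul_apply]
  have hterm : ∀ p : (Fin z → Fin d) × (Fin z → Fin d),
      (Wmat d z v)ᴴ q p * Wmat d z v p q'
        = (∏ a, ((starRingEnd ℂ) (v (p.1 a) (q.1 a)) * v (p.1 a) (q'.1 a)))
          * ∏ a, (v (p.2 a) (q.2 a) * (starRingEnd ℂ) (v (p.2 a) (q'.2 a))) := by
    intro p
    rw [Matrix.conjTranspose_apply]
    simp only [Wmat, Matrix.of_apply, Complex.star_def, map_prod, _root_.map_mul,
      Complex.conj_conj]
    rw [← Finset.prod_mul_distrib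
      (f := fun a => (starRingEnd ℂ) (v (p.1 a) (q.1 a)) * v (p.1 a) (q'.1 a))
      (g := fun a => v (p.2 a) (q.2 a) * (starRingEnd ℂ) (v (p.2 a) (q'.2 a))),
      ← Finset.prod_mul_distrib]
    exact Finset.prod_congr rfl fun a _ => by ring
  rw [Finset.sum_congr rfl fun p _ => hterm p, Fintype.sum_prod_type]
  simp only
  rw [← Finset.sum_mul_sum, keyC' hv, keyC hv]
  by_cases h1 : q.1 = q'.1 <;> by_cases h2 : q.2 = q'.2 <;>
    simp [Matrix.one_apply, Prod.ext_iff, h1, h2]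

lemma star_dot (y : (Fin z → Fin d) × (Fin z → Fin d) → ℂ) :
    star y ⬝ᵥ y = ((∑ p, ‖y p‖ ^ 2 : ℝ) : ℂ) := by
  rw [dotProduct]
  push_cast
  refine Finset.sum_congr rfl fun p _ => ?_
  rw [Pi.star_apply, Complex.star_def, mul_comm, Complex.mul_conj, Complex.normSq_eq_norm_sq]
  push_cast
  ring

lemma W_norm_preserve (hv : v ∈ Matrix.unitaryGroup (Fin d) ℂ)
    (x : (Fin z → Fin d) × (Fin z → Fin d) → ℂ) :
    ∑ p, ‖(Wmat d z v).mulVec x p‖ ^ 2 = ∑ p, ‖x p‖ ^ 2 := by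
  have h : star ((Wmat d z v).mulVec x) ⬝ᵥ ((Wmat d z v).mulVec x) = star x ⬝ᵥ x := by
    rw [Matrix.star_mulVec, dotProduct_mulVec, Matrix.vecMul_vecMul,
      Wmat_unitary hv, Matrix.vecMul_one]
  rw [star_dot, star_dot] at h
  exact_mod_cast h

lemma transferT_eq_mul (u : Fin d → Matrix (Fin d) (Fin d) ℂ)
    (p q : (Fin z → Fin d) × (Fin z → Fin d)) :
    transferT d z u v p q =
      Matrix.trace ((List.ofFn fun a => u (p.1 a)).prod
        * ((List.ofFn fun a => u (p.2 a)).prod)ᴴ) * Wmat d z v p q := rfl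

end Aux

section Main
variable {d z : ℕ} {u : Fin d → Matrix (Fin d) (Fin d) ℂ} {v : Matrix (Fin d) (Fin d) ℂ}

lemma part_i (hu : ∀ i, u i ∈ Matrix.unitaryGroup (Fin d) ℂ)
    (hv : v ∈ Matrix.unitaryGroup (Fin d) ℂ) :
    (transferT d z u v).mulVec (bulletPsi d z) = (d : ℂ) • bulletPsi d z := by
  funext p
  have h1 : (transferT d z u v).mulVec (bulletPsi d z) p
      = ∑ q1 : Fin z → Fin d, transferT d z u v p (q1, q1) := by
    rw [Matrix.mulVec, dotProduct, Fintype.sum_prod_type]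
    simp [bulletPsi, mul_ite]
  rw [h1]
  have h2 : ∑ q1 : Fin z → Fin d, transferT d z u v p (q1, q1)
      = Matrix.trace ((List.ofFn fun a => u (p.1 a)).prod
          * ((List.ofFn fun a => u (p.2 a)).prod)ᴴ) * if p.1 = p.2 then 1 else 0 := by
    simp only [transferT, Matrix.of_apply]
    rw [← Finset.mul_sum, keyR hv p.1 p.2]
  rw [h2]
  by_cases hpe : p.1 = p.2
  · rw [if_pos hpe, hpe, trace_self _ (prodU_mem hu p.2)]
    simp [bulletPsi, hpe]
  · simp [bulletPsi, hpe]

lemma part_ii (hu : ∀ i, u i ∈ Matrix.unitaryGroup (Fin d) ℂ)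
    (hv : v ∈ Matrix.unitaryGroup (Fin d) ℂ) :
    Matrix.vecMul (bulletPsi d z) (transferT d z u v) = (d : ℂ) • bulletPsi d z := by
  funext q
  have h1 : Matrix.vecMul (bulletPsi d z) (transferT d z u v) q
      = ∑ j : Fin z → Fin d, transferT d z u v (j, j) q := by
    rw [Matrix.vecMul, dotProduct, Fintype.sum_prod_type]
    simp [bulletPsi, ite_mul]
  rw [h1]
  have h2 : ∑ j : Fin z → Fin d, transferT d z u v (j, j) q
      = ∑ j : Fin z → Fin d,
          (d : ℂ) * ∏ a, (v (j a) (q.1 a) * (starRingEnd ℂ) (v (j a) (q.2 a))) := by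
    refine Finset.sum_congr rfl fun j _ => ?_
    simp only [transferT, Matrix.of_apply]
    rw [trace_self _ (prodU_mem hu j)]
  rw [h2, ← Finset.mul_sum, keyC hv q.1 q.2]
  simp [bulletPsi]

lemma eig_bound (hu : ∀ i, u i ∈ Matrix.unitaryGroup (Fin d) ℂ)
    (hv : v ∈ Matrix.unitaryGroup (Fin d) ℂ) :
    ∀ lam ∈ spectrum ℂ (transferT d z u v), ‖lam‖ ≤ d := by
  intro lam hlam
  rw [spectrum.mem_iff] at hlam
  have hdet : (algebraMap ℂ _ lam - transferT d z u v).det = 0 := by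
    by_contra h
    exact hlam ((Matrix.isUnit_iff_isUnit_det _).mpr (isUnit_iff_ne_zero.mpr h))
  obtain ⟨x, hx0, hx⟩ := (Matrix.exists_mulVec_eq_zero_iff).mpr hdet
  have hTx : (transferT d z u v).mulVec x = lam • x := by
    rw [Matrix.sub_mulVec, Algebra.algebraMap_eq_smul_one, Matrix.smul_mulVec,
      Matrix.one_mulVec, sub_eq_zero] at hx
    exact hx.symm
  have hfac : ∀ p, (transferT d z u v).mulVec x p
      = Matrix.trace ((List.ofFn fun a => u (p.1 a)).prod
          * ((List.ofFn fun a => u (p.2 a)).prod)ᴴ) * (Wmat d z v).mulVec x p := by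
    intro p
    rw [Matrix.mulVec, dotProduct, Matrix.mulVec, dotProduct, Finset.mul_sum]
    exact Finset.sum_congr rfl fun q _ => by rw [transferT_eq_mul]; ring
  have hlx : ∀ p, lam * x p
      = Matrix.trace ((List.ofFn fun a => u (p.1 a)).prod
          * ((List.ofFn fun a => u (p.2 a)).prod)ᴴ) * (Wmat d z v).mulVec x p := by
    intro p
    rw [← hfac p, hTx]
    simp
  have hineq : ∑ p, ‖lam * x p‖ ^ 2
      ≤ ∑ p, ((d : ℝ) * ‖(Wmat d z v).mulVec x p‖) ^ 2 := by
    refine Finset.sum_le_sum fun p _ => ?_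
    rw [hlx p]
    refine pow_le_pow_left₀ (norm_nonneg _) ?_ 2
    rw [norm_mul]
    exact mul_le_mul_of_nonneg_right
      (trace_bound _ _ (prodU_mem hu p.1) (prodU_mem hu p.2)) (norm_nonneg _)
  have hS : (0 : ℝ) < ∑ p, ‖x p‖ ^ 2 := by
    obtain ⟨p0, hp0⟩ := Function.ne_iff.mp hx0
    have hne : x p0 ≠ 0 := by simpa using hp0
    have h1 : (0:ℝ) < ‖x p0‖ ^ 2 := pow_pos (norm_pos_iff.mpr hne) 2
    refine lt_of_lt_of_le h1 ?_
    exact Finset.single_le_sum (f := fun p => ‖x p‖ ^ 2)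
      (fun p _ => by positivity) (Finset.mem_univ p0)
  have habs2 : ‖lam‖ ^ 2 * ∑ p, ‖x p‖ ^ 2
      ≤ (d : ℝ) ^ 2 * ∑ p, ‖x p‖ ^ 2 := by
    calc ‖lam‖ ^ 2 * ∑ p, ‖x p‖ ^ 2
        = ∑ p, ‖lam * x p‖ ^ 2 := by
          rw [Finset.mul_sum]
          exact Finset.sum_congr rfl fun p _ => by rw [norm_mul]; ring
      _ ≤ ∑ p, ((d : ℝ) * ‖(Wmat d z v).mulVec x p‖) ^ 2 := hineq
      _ = (d : ℝ) ^ 2 * ∑ p, ‖(Wmat d z v).mulVec x p‖ ^ 2 := by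
          rw [Finset.mul_sum]
          exact Finset.sum_congr rfl fun p _ => by ring
      _ = (d : ℝ) ^ 2 * ∑ p, ‖x p‖ ^ 2 := by rw [W_norm_preserve hv]
  have hsq : ‖lam‖ ^ 2 ≤ (d : ℝ) ^ 2 :=
    le_of_mul_le_mul_right (by linarith [habs2]) hS
  nlinarith [norm_nonneg lam, Nat.cast_nonneg (α := ℝ) d]

lemma d_mem (hd : 2 ≤ d) (hu : ∀ i, u i ∈ Matrix.unitaryGroup (Fin d) ℂ)
    (hv : v ∈ Matrix.unitaryGroup (Fin d) ℂ) :
    (d : ℂ) ∈ spectrum ℂ (transferT d z u v) := by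
  rw [spectrum.mem_iff]
  intro hunit
  have hdet := (Matrix.isUnit_iff_isUnit_det _).mp hunit
  rw [isUnit_iff_ne_zero] at hdet
  apply hdet
  rw [← Matrix.exists_mulVec_eq_zero_iff]
  refine ⟨bulletPsi d z, ?_, ?_⟩
  · intro h
    have hne : (0 : Fin 1) = 0 := rfl
    have hd0 : (0 : ℕ) < d := by omega
    have := congrFun h (fun _ => (⟨0, hd0⟩ : Fin d), fun _ => (⟨0, hd0⟩ : Fin d))
    simp [bulletPsi] at this
  · rw [Matrix.sub_mulVec, Algebra.algebraMap_eq_smul_one, Matrix.smul_mulVec,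
      Matrix.one_mulVec, part_i hu hv, sub_self]

end Main

theorem deterministic_maximal_eigenvector
    (d z : ℕ) (hd : 2 ≤ d) (hz : 1 ≤ z)
    (u : Fin d → Matrix (Fin d) (Fin d) ℂ) (hu : ∀ i, u i ∈ Matrix.unitaryGroup (Fin d) ℂ)
    (v : Matrix (Fin d) (Fin d) ℂ) (hv : v ∈ Matrix.unitaryGroup (Fin d) ℂ) :
    (transferT d z u v).mulVec (bulletPsi d z) = (d : ℂ) • bulletPsi d z ∧
    Matrix.vecMul (bulletPsi d z) (transferT d z u v) = (d : ℂ) • bulletPsi d z ∧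
    (∀ lam ∈ spectrum ℂ (transferT d z u v), ‖lam‖ ≤ d) ∧
    spectralRadius ℂ (transferT d z u v) = ENNReal.ofReal d := by
  refine ⟨part_i hu hv, part_ii hu hv, eig_bound hu hv, ?_⟩
  apply le_antisymm
  · rw [spectralRadius]
    refine iSup₂_le fun k hk => ?_
    rw [← enorm_eq_nnnorm, ← ofReal_norm]
    exact ENNReal.ofReal_le_ofReal
      (by simpa using eig_bound hu hv k hk)
  · have hmem := d_mem hd hu hv (z := z)
    have hle := le_iSup₂ (f := fun k (_ : k ∈ spectrum ℂ (transferT d z u v)) =>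
      (‖k‖₊ : ENNReal)) (d : ℂ) hmem
    rw [spectralRadius]
    refine le_trans ?_ hle
    rw [← enorm_eq_nnnorm, ← ofReal_norm]
    simp
end
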